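/- arXiv:2405.17404 — 2 statements merged into one kernel-verified Lean document; each statement's English description precedes it below -/
import Mathlib

section
/- Greedy submodular maximization guarantee: let F be a monotone nondecreasing submodular set function on subsets of [n] with F(∅) = 0, and let the greedy algorithm iteratively add the element with the largest marginal gain for c steps, producing set G_c. Then F(G_c) ≥ (1 − (1 − 1/c)^c)·max_{|V|≤c} F(V) ≥ (1 − 1/e)·max_{|V|≤c} F(V). -/
/-!
If `V` has at most `c` elements, diminishing returns bound the gap `F V - F S` by the sum of
the marginal gains of the elements of `V` over `S`, hence by `c` times the greedy gain. So each
greedy step closes at least a `1/c` fraction of the remaining gap, which after `c` steps is at most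
`(1 - 1/c)^c ≤ 1/e` of the initial gap `F V`.
-/

open Finset

variable {α : Type*} [DecidableEq α]

/-- Submodularity in its diminishing-returns form. -/
def HasDiminishingReturns (F : Finset α → ℝ) : Prop :=
  ∀ V W : Finset α, ∀ x : α, V ⊆ W → x ∉ W → F (insert x W) - F W ≤ F (insert x V) - F V

namespace HasDiminishingReturns

variable {F : Finset α → ℝ}

theorem sub_le_sum_marginal (hsub : HasDiminishingReturns F) (hmono : Monotone F)
    (S T : Finset α) : F (S ∪ T) - F S ≤ ∑ x ∈ T, (F (insert x S) - F S) := by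
  induction T using Finset.induction_on with
  | empty => simp
  | @insert a T haT ih =>
    have hgain : 0 ≤ F (insert a S) - F S := sub_nonneg.mpr (hmono (subset_insert a S))
    rw [sum_insert haT, union_insert]
    by_cases ha : a ∈ S ∪ T
    · rw [insert_eq_self.mpr ha]
      linarith
    · linarith [hsub S (S ∪ T) a subset_union_left ha]

theorem sub_le_card_mul_of_marginal_le (hsub : HasDiminishingReturns F) (hmono : Monotone F)
    {S : Finset α} {δ : ℝ} (hδ : ∀ y, F (insert y S) - F S ≤ δ) (V : Finset α) :
    F V - F S ≤ V.card * δ :=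
  calc F V - F S ≤ F (S ∪ V) - F S := by gcongr; exact hmono subset_union_right
    _ ≤ ∑ y ∈ V, (F (insert y S) - F S) := hsub.sub_le_sum_marginal hmono S V
    _ ≤ ∑ _y ∈ V, δ := sum_le_sum fun y _ => hδ y
    _ = V.card * δ := by rw [sum_const, nsmul_eq_mul]

theorem greedy_step_gap_le (hsub : HasDiminishingReturns F) (hmono : Monotone F)
    {c : ℕ} (hc : 0 < c) {V : Finset α} (hV : V.card ≤ c) {S : Finset α} {x : α}
    (hx : ∀ y, F (insert y S) - F S ≤ F (insert x S) - F S) :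
    F V - F (insert x S) ≤ (1 - 1 / (c : ℝ)) * (F V - F S) := by
  have hcpos : (0 : ℝ) < c := by exact_mod_cast hc
  have hgain : 0 ≤ F (insert x S) - F S := sub_nonneg.mpr (hmono (subset_insert x S))
  have hgap : F V - F S ≤ c * (F (insert x S) - F S) :=
    (hsub.sub_le_card_mul_of_marginal_le hmono hx V).trans
      (mul_le_mul_of_nonneg_right (by exact_mod_cast hV) hgain)
  have hfrac : (F V - F S) / c ≤ F (insert x S) - F S := by
    rw [div_le_iff₀ hcpos]
    linarith
  calc F V - F (insert x S) ≤ (F V - F S) - (F V - F S) / c := by linarith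
    _ = (1 - 1 / (c : ℝ)) * (F V - F S) := by ring

theorem greedy_approximation (hsub : HasDiminishingReturns F) (hmono : Monotone F)
    (hF0 : F ∅ = 0) {c : ℕ} (hc : 0 < c) {G : ℕ → Finset α} (hG0 : G 0 = ∅)
    (hGstep : ∀ t, ∃ x, G (t + 1) = insert x (G t) ∧
      ∀ y, F (insert y (G t)) - F (G t) ≤ F (insert x (G t)) - F (G t))
    {V : Finset α} (hV : V.card ≤ c) :
    (1 - (1 - 1 / (c : ℝ)) ^ c) * F V ≤ F (G c) := by
  have hratio : 0 ≤ 1 - 1 / (c : ℝ) :=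
    sub_nonneg.mpr (div_le_one_of_le₀ (by exact_mod_cast hc) (Nat.cast_nonneg c))
  have hgap := le_geom (u := fun t => F V - F (G t)) hratio c fun t _ => by
    obtain ⟨x, hGx, hx⟩ := hGstep t
    simpa only [hGx] using hsub.greedy_step_gap_le hmono hc hV hx
  simp only [hG0, hF0, sub_zero] at hgap
  linarith

end HasDiminishingReturns

theorem one_sub_inv_pow_le_exp_neg_one {c : ℕ} (hc : 0 < c) :
    (1 - 1 / (c : ℝ)) ^ c ≤ 1 / Real.exp 1 := by
  rw [one_div (Real.exp 1), ← Real.exp_neg]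
  exact Real.one_sub_div_pow_le_exp_neg (by exact_mod_cast hc)

theorem greedy_submodular_maximization_guarantee_general
    (n c : ℕ) (hc : 0 < c)
    (F : Finset (Fin n) → ℝ)
    (hmono : ∀ V W : Finset (Fin n), V ⊆ W → F V ≤ F W)
    (hsub : ∀ V W : Finset (Fin n), ∀ x : Fin n, V ⊆ W → x ∉ W →
      F (insert x W) - F W ≤ F (insert x V) - F V)
    (hF0 : F ∅ = 0)
    (G : ℕ → Finset (Fin n))
    (hG0 : G 0 = ∅)
    (hGstep : ∀ t, ∃ x : Fin n, G (t + 1) = insert x (G t) ∧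
      ∀ y : Fin n, F (insert y (G t)) - F (G t) ≤ F (insert x (G t)) - F (G t)) :
    ∀ V : Finset (Fin n), V.card ≤ c →
      (1 - (1 - 1 / (c : ℝ)) ^ c) * F V ≤ F (G c) ∧
      (1 - 1 / Real.exp 1) * F V ≤ F (G c) := by
  intro V hV
  have hmono' : Monotone F := fun V W => hmono V W
  have hguarantee := HasDiminishingReturns.greedy_approximation hsub hmono' hF0 hc hG0 hGstep hV
  have hFV : 0 ≤ F V := hF0 ▸ hmono' (empty_subset V)
  refine ⟨hguarantee, le_trans ?_ hguarantee⟩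
  gcongr
  exact one_sub_inv_pow_le_exp_neg_one hc

/-- greedy submodular maximization guarantee. For a monotone
nondecreasing submodular set function `F` with `F(∅) = 0` and greedy iterates
`G₀ = ∅`, `G_{t+1} = G_t ∪ {argmaxₓ F(G_t ∪ {x}) − F(G_t)}`, after `c` steps
`F(G_c) ≥ (1 − (1 − 1/c)^c)·max_{|V|≤c} F(V) ≥ (1 − 1/e)·max_{|V|≤c} F(V)`. -/
theorem greedy_submodular_maximization_guarantee
    (n c : ℕ) (hc : 0 < c) (hcn : c ≤ n)
    (F : Finset (Fin n) → ℝ)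
    (hmono : ∀ V W : Finset (Fin n), V ⊆ W → F V ≤ F W)
    (hsub : ∀ V W : Finset (Fin n), ∀ x : Fin n, V ⊆ W → x ∉ W →
      F (insert x W) - F W ≤ F (insert x V) - F V)
    (hF0 : F ∅ = 0)
    (G : ℕ → Finset (Fin n))
    (hG0 : G 0 = ∅)
    (hGstep : ∀ t, ∃ x : Fin n, G (t + 1) = insert x (G t) ∧
      ∀ y : Fin n, F (insert y (G t)) - F (G t) ≤ F (insert x (G t)) - F (G t)) :
    ∀ V : Finset (Fin n), V.card ≤ c →
      (1 - (1 - 1 / (c : ℝ)) ^ c) * F V ≤ F (G c) ∧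
      (1 - 1 / Real.exp 1) * F V ≤ F (G c) :=
  greedy_submodular_maximization_guarantee_general n c hc F hmono hsub hF0 G hG0 hGstep
end

section
/- Geodesic step optimality in GIGA-type updates: let u, v, x be unit vectors in ℝ^n with ⟨u, x⟩ < 1 and ⟨v, x⟩ < 1, let ζ₀ = ⟨u, v⟩, ζ₁ = ⟨u, x⟩, ζ₂ = ⟨v, x⟩ and η = (ζ₀ − ζ₁ζ₂)/((ζ₀ − ζ₁ζ₂) + (ζ₁ − ζ₀ζ₂)), assuming the denominator is positive. Then the normalized combination x' = ((1−η)x + ηv)/‖(1−η)x + ηv‖ satisfies ⟨u, x'⟩ ≥ max(⟨u,x⟩, ⟨u,v⟩) when ζ₀ − ζ₁ζ₂ > 0 and ζ₁ − ζ₀ζ₂ > 0. -/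
/-- Euclidean norm of a vector in `ℝⁿ`. -/
noncomputable def eucNorm {n : ℕ} (x : Fin n → ℝ) : ℝ := Real.sqrt (∑ i, x i ^ 2)

/-- geodesic step optimality in GIGA-type updates. For unit
vectors `u, v, x` with `⟨u,x⟩ < 1`, `⟨v,x⟩ < 1`, setting `ζ₀ = ⟨u,v⟩`,
`ζ₁ = ⟨u,x⟩`, `ζ₂ = ⟨v,x⟩` and `η = (ζ₀ − ζ₁ζ₂)/((ζ₀ − ζ₁ζ₂) + (ζ₁ − ζ₀ζ₂))`
(denominator positive), when `ζ₀ − ζ₁ζ₂ > 0` and `ζ₁ − ζ₀ζ₂ > 0` the normalized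
combination `x' = ((1−η)x + ηv)/‖(1−η)x + ηv‖` satisfies
`⟨u, x'⟩ ≥ max(⟨u,x⟩, ⟨u,v⟩)`. -/
theorem giga_geodesic_step_improves_alignment
    (n : ℕ) (u v x : Fin n → ℝ)
    (hu : eucNorm u = 1) (hv : eucNorm v = 1) (hx : eucNorm x = 1)
    (hux : dotProduct u x < 1) (hvx : dotProduct v x < 1)
    (ζ₀ ζ₁ ζ₂ η : ℝ)
    (hζ₀ : ζ₀ = dotProduct u v)
    (hζ₁ : ζ₁ = dotProduct u x)
    (hζ₂ : ζ₂ = dotProduct v x)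
    (hdenpos : 0 < (ζ₀ - ζ₁ * ζ₂) + (ζ₁ - ζ₀ * ζ₂))
    (hη : η = (ζ₀ - ζ₁ * ζ₂) / ((ζ₀ - ζ₁ * ζ₂) + (ζ₁ - ζ₀ * ζ₂)))
    (h1 : 0 < ζ₀ - ζ₁ * ζ₂) (h2 : 0 < ζ₁ - ζ₀ * ζ₂)
    (hne : 0 < eucNorm (fun i => (1 - η) * x i + η * v i))
    (x' : Fin n → ℝ)
    (hx' : x' = fun i => ((1 - η) * x i + η * v i)
        / eucNorm (fun i => (1 - η) * x i + η * v i)) :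
    max (dotProduct u x) (dotProduct u v)
      ≤ dotProduct u x' := by
  subst hx'
  unfold eucNorm at hx hv hne ⊢
  have hsx : ∑ i, x i ^ 2 = 1 := Real.sqrt_eq_one.mp hx
  have hsv : ∑ i, v i ^ 2 = 1 := Real.sqrt_eq_one.mp hv
  have hζ₂' : ∑ i, v i * x i = ζ₂ := by
    rw [hζ₂]; simp [dotProduct]
  set N : ℝ := Real.sqrt (∑ i, ((1 - η) * x i + η * v i) ^ 2) with hNdef
  have hNpos : 0 < N := hne
  have hNsq : N ^ 2 = (1 - η) ^ 2 + η ^ 2 + 2 * (1 - η) * η * ζ₂ := by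
    have h0 : (0:ℝ) ≤ ∑ i, ((1 - η) * x i + η * v i) ^ 2 :=
      Finset.sum_nonneg fun i _ => sq_nonneg _
    rw [hNdef, Real.sq_sqrt h0]
    have expand : ∀ i : Fin n, ((1 - η) * x i + η * v i) ^ 2 =
        (1 - η) ^ 2 * x i ^ 2 + η ^ 2 * v i ^ 2 + 2 * (1 - η) * η * (v i * x i) :=
      fun i => by ring
    simp_rw [expand]
    rw [Finset.sum_add_distrib, Finset.sum_add_distrib, ← Finset.mul_sum,
      ← Finset.mul_sum, ← Finset.mul_sum, hsx, hsv, hζ₂']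
    ring
  have hdot : dotProduct u (fun i => ((1 - η) * x i + η * v i) / N)
      = ((1 - η) * ζ₁ + η * ζ₀) / N := by
    simp only [dotProduct]
    simp_rw [← mul_div_assoc]
    rw [← Finset.sum_div]
    congr 1
    have expand : ∀ i : Fin n, u i * ((1 - η) * x i + η * v i) =
        (1 - η) * (u i * x i) + η * (u i * v i) := fun i => by ring
    simp_rw [expand]
    rw [Finset.sum_add_distrib, ← Finset.mul_sum, ← Finset.mul_sum]
    rw [hζ₁, hζ₀]
    simp [dotProduct]
  -- abbreviations
  have hden : (ζ₀ - ζ₁ * ζ₂) + (ζ₁ - ζ₀ * ζ₂) ≠ 0 := ne_of_gt hdenpos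
  set Q : ℝ := ζ₀ ^ 2 + ζ₁ ^ 2 - 2 * ζ₀ * ζ₁ * ζ₂ with hQdef
  have key : ((ζ₀ - ζ₁ * ζ₂) + (ζ₁ - ζ₀ * ζ₂)) ^ 2 * N ^ 2 = (1 - ζ₂ ^ 2) * Q := by
    rw [hNsq, hη, hQdef]
    field_simp
    ring
  have hCS : ζ₂ ^ 2 ≤ 1 := by
    have := Finset.sum_mul_sq_le_sq_mul_sq Finset.univ v x
    rw [hsx, hsv, hζ₂'] at this
    simpa using this
  have hprod : 0 < (1 - ζ₂ ^ 2) * Q := by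
    rw [← key]; positivity
  have h1z : 0 < 1 - ζ₂ ^ 2 := by
    rcases lt_or_eq_of_le (sub_nonneg.mpr hCS) with h | h
    · exact h
    · rw [← h] at hprod; simp at hprod
  have hQpos : 0 < Q := (mul_pos_iff.mp hprod).elim (fun h => h.2)
    (fun h => absurd h.1 (by linarith))
  have hM : (1 - η) * ζ₁ + η * ζ₀ = Q / ((ζ₀ - ζ₁ * ζ₂) + (ζ₁ - ζ₀ * ζ₂)) := by
    rw [hη, hQdef]; field_simp; ring
  rw [hdot, ← hζ₁, ← hζ₀, hM]
  have hMpos : 0 < Q / ((ζ₀ - ζ₁ * ζ₂) + (ζ₁ - ζ₀ * ζ₂)) := div_pos hQpos hdenpos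
  have main : ∀ c : ℝ, c ^ 2 * (1 - ζ₂ ^ 2) ≤ Q →
      c ≤ Q / ((ζ₀ - ζ₁ * ζ₂) + (ζ₁ - ζ₀ * ζ₂)) / N := by
    intro c hc
    rw [le_div_iff₀ hNpos]
    rcases le_or_gt c 0 with h | h
    · exact le_trans (mul_nonpos_iff.mpr (Or.inr ⟨h, hNpos.le⟩)) hMpos.le
    · have hsq : (c * N) ^ 2 ≤ (Q / ((ζ₀ - ζ₁ * ζ₂) + (ζ₁ - ζ₀ * ζ₂))) ^ 2 := by
        rw [div_pow, mul_pow]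
        rw [le_div_iff₀ (by positivity)]
        calc c ^ 2 * N ^ 2 * ((ζ₀ - ζ₁ * ζ₂) + (ζ₁ - ζ₀ * ζ₂)) ^ 2
            = c ^ 2 * (((ζ₀ - ζ₁ * ζ₂) + (ζ₁ - ζ₀ * ζ₂)) ^ 2 * N ^ 2) := by ring
          _ = c ^ 2 * ((1 - ζ₂ ^ 2) * Q) := by rw [key]
          _ = (c ^ 2 * (1 - ζ₂ ^ 2)) * Q := by ring
          _ ≤ Q * Q := mul_le_mul_of_nonneg_right hc hQpos.le
          _ = Q ^ 2 := by ring
      have h1' : (0:ℝ) ≤ c * N := (mul_pos h hNpos).le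
      have h2' := Real.sqrt_le_sqrt hsq
      rwa [Real.sqrt_sq h1', Real.sqrt_sq hMpos.le] at h2'
  apply max_le
  · refine main ζ₁ ?_
    have hid : Q - ζ₁ ^ 2 * (1 - ζ₂ ^ 2) = (ζ₀ - ζ₁ * ζ₂) ^ 2 := by rw [hQdef]; ring
    linarith [sq_nonneg (ζ₀ - ζ₁ * ζ₂)]
  · refine main ζ₀ ?_
    have hid : Q - ζ₀ ^ 2 * (1 - ζ₂ ^ 2) = (ζ₁ - ζ₀ * ζ₂) ^ 2 := by rw [hQdef]; ring
    linarith [sq_nonneg (ζ₁ - ζ₀ * ζ₂)]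
end
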